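/- Disjoint decomposition of 𝔼_X^Λ: let X, Y, Z ⊆ Λ ⊆ Γ with Λ finite, and suppose Λ∖X is the disjoint union of Λ∖Y and Λ∖Z. Then 𝔼_X^Λ = 𝔼_Y^Λ ∘ 𝔼_Z^Λ = 𝔼_Z^Λ ∘ 𝔼_Y^Λ (as linear maps on 𝔄_Λ). -/

import Mathlib

open scoped Classical

/-- The canonical anticommutation relations for a family `a x` of annihilation
operators in a C*-algebra. -/
def IsCAR {Γ A : Type*} [Ring A] [StarRing A] (a : Γ → A) : Prop :=
  (∀ x y, a x * a y + a y * a x = 0) ∧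
  (∀ x y, star (a x) * star (a y) + star (a y) * star (a x) = 0) ∧
  (∀ x y, a x * star (a y) + star (a y) * a x = if x = y then (1 : A) else 0)

/-- The four possible factors of a monomial at a site `x`:
`1`, `a x`, `a x *`, and `a x * a x`. -/
def carFactor {Γ A : Type*} [Ring A] [StarRing A] (a : Γ → A) (k : Fin 4) (x : Γ) : A :=
  match k with
  | 0 => 1
  | 1 => a x
  | 2 => star (a x)
  | 3 => star (a x) * a x

/-- The monomial with factor pattern `k` along the enumeration `l` of a finite set of sites. -/
def carMonomial {Γ A : Type*} [Ring A] [StarRing A] (a : Γ → A) (l : List Γ)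
    (k : Γ → Fin 4) : A :=
  (l.map fun x => carFactor a (k x) x).prod

/-- The number of odd factors (`a x` or `a x *`) of the monomial with pattern `k` along `l`. -/
def carOddCount {Γ : Type*} (l : List Γ) (k : Γ → Fin 4) : ℕ :=
  l.countP fun x => decide (k x = 1 ∨ k x = 2)

/-- `𝔄_X`: the linear span of the monomials supported in the finite set `X`. -/
def carSpan {Γ A : Type*} [Ring A] [StarRing A] [Algebra ℂ A] (a : Γ → A) (X : Finset Γ) :
    Submodule ℂ A :=
  Submodule.span ℂ {m | ∃ (l : List Γ) (k : Γ → Fin 4),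
    l.Nodup ∧ l.toFinset = X ∧ m = carMonomial a l k}

/-- `𝔄_X⁺`: the linear span of the even monomials supported in the finite set `X`. -/
def carSpanEven {Γ A : Type*} [Ring A] [StarRing A] [Algebra ℂ A] (a : Γ → A) (X : Finset Γ) :
    Submodule ℂ A :=
  Submodule.span ℂ {m | ∃ (l : List Γ) (k : Γ → Fin 4),
    l.Nodup ∧ l.toFinset = X ∧ Even (carOddCount l k) ∧ m = carMonomial a l k}

/-- The single-site unitaries `u_x^(0) = 1`, `u_x^(1) = a_x* + a_x`, `u_x^(2) = a_x* − a_x`,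
`u_x^(3) = 1 − 2 a_x* a_x`. -/
def uFactor {Γ A : Type*} [Ring A] [StarRing A] (a : Γ → A) (k : Fin 4) (x : Γ) : A :=
  match k with
  | 0 => 1
  | 1 => star (a x) + a x
  | 2 => star (a x) - a x
  | 3 => 1 - 2 * (star (a x) * a x)

/-- The unitary `u(α) = u_{x_1}^{(α(x_1))} ⋯ u_{x_n}^{(α(x_n))}` along the enumeration `l`
of `Λ ∖ X`. -/
def uProd {Γ A : Type*} [Ring A] [StarRing A] (a : Γ → A) (l : List Γ)
    (α : Fin l.length → Fin 4) : A :=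
  (List.ofFn fun i => uFactor a (α i) (l.get i)).prod

/-- The conditional expectation `𝔼_X^Λ(B) = 4^{−|Λ∖X|} ∑_{α} u(α)* B u(α)`, where `l` is
an enumeration of `Λ ∖ X`. -/
noncomputable def condExp {Γ A : Type*} [Ring A] [StarRing A] [Algebra ℂ A] (a : Γ → A)
    (l : List Γ) (B : A) : A :=
  ((4 : ℂ) ^ l.length)⁻¹ • ∑ α : Fin l.length → Fin 4, star (uProd a l α) * B * uProd a l α

/-!
`𝔼` along `x :: l` is the single-site average `𝔼` along `[x]` followed by `𝔼` along `l`, hence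
`𝔼` along `l₁ ++ l₂` is `𝔼_{l₂} ∘ 𝔼_{l₁}`. Single-site unitaries at distinct sites commute or
anticommute: the odd ones `u^(1)`, `u^(2)` anticommute by the CAR, and `u^(3) = u^(1) u^(2)` is
even. A sign does not change a conjugation `u* B u`, so single-site averages at distinct sites
commute and `𝔼` along a duplicate-free list depends only on its underlying set. As `Λ∖X` is
enumerated both by `lY ++ lZ` and by `lZ ++ lY`, both factorisations follow.
-/

lemma commute_mul_of_anticomm {A : Type*} [NonUnitalRing A] {p q r : A}
    (hp : p * r = -(r * p)) (hq : q * r = -(r * q)) : Commute (p * q) r := by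
  rw [Commute, SemiconjBy, mul_assoc, hq, mul_neg, ← mul_assoc, hp, neg_mul, neg_neg, mul_assoc]

lemma conj_conj_comm_of_eq_or_eq_neg {A : Type*} [NonUnitalRing A] [StarRing A] {P Q : A}
    (h : P * Q = Q * P ∨ P * Q = -(Q * P)) (B : A) :
    star P * (star Q * B * Q) * P = star Q * (star P * B * P) * Q := by
  have hconj : star (Q * P) * B * (Q * P) = star (P * Q) * B * (P * Q) := by
    rcases h with h | h <;> simp [h]
  simpa only [star_mul, mul_assoc] using hconj

section CAR

variable {Γ A : Type*} [Ring A] [StarRing A] {a : Γ → A}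

namespace IsCAR

lemma mul_anticomm (hCAR : IsCAR a) (x y : Γ) : a x * a y = -(a y * a x) :=
  eq_neg_of_add_eq_zero_left (hCAR.1 x y)

lemma star_mul_star_anticomm (hCAR : IsCAR a) (x y : Γ) :
    star (a x) * star (a y) = -(star (a y) * star (a x)) :=
  eq_neg_of_add_eq_zero_left (hCAR.2.1 x y)

lemma mul_star_anticomm (hCAR : IsCAR a) {x y : Γ} (hxy : x ≠ y) :
    a x * star (a y) = -(star (a y) * a x) :=
  eq_neg_of_add_eq_zero_left (by simpa [hxy] using hCAR.2.2 x y)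

lemma star_mul_anticomm (hCAR : IsCAR a) {x y : Γ} (hxy : x ≠ y) :
    star (a x) * a y = -(a y * star (a x)) :=
  eq_neg_of_add_eq_zero_right (by simpa [hxy.symm] using hCAR.2.2 y x)

lemma mul_star_self (hCAR : IsCAR a) (x : Γ) : a x * star (a x) = 1 - star (a x) * a x :=
  eq_sub_of_add_eq (by simpa using hCAR.2.2 x x)

lemma mul_self_eq_zero [Algebra ℂ A] (hCAR : IsCAR a) (x : Γ) : a x * a x = 0 := by
  have h : (2 : ℂ) • (a x * a x) = 0 := by rw [two_smul]; exact hCAR.1 x x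
  simpa using h

lemma star_mul_star_self_eq_zero [Algebra ℂ A] (hCAR : IsCAR a) (x : Γ) :
    star (a x) * star (a x) = 0 := by
  have h : (2 : ℂ) • (star (a x) * star (a x)) = 0 := by rw [two_smul]; exact hCAR.2.1 x x
  simpa using h

end IsCAR

lemma uFactor_three_eq_mul [Algebra ℂ A] (hCAR : IsCAR a) (x : Γ) :
    uFactor a 3 x = uFactor a 1 x * uFactor a 2 x := by
  simp only [uFactor, add_mul, mul_sub, hCAR.star_mul_star_self_eq_zero, hCAR.mul_self_eq_zero,
    hCAR.mul_star_self]
  noncomm_ring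

lemma uFactor_odd_anticomm (hCAR : IsCAR a) {x y : Γ} (hxy : x ≠ y) {j k : Fin 4}
    (hj : j = 1 ∨ j = 2) (hk : k = 1 ∨ k = 2) :
    uFactor a j x * uFactor a k y = -(uFactor a k y * uFactor a j x) := by
  rcases hj with rfl | rfl <;> rcases hk with rfl | rfl <;>
  · simp only [uFactor, add_mul, mul_add, sub_mul, mul_sub, hCAR.mul_anticomm x y,
      hCAR.star_mul_star_anticomm x y, hCAR.mul_star_anticomm hxy, hCAR.star_mul_anticomm hxy]
    abel

lemma uFactor_three_commute [Algebra ℂ A] (hCAR : IsCAR a) {x y : Γ} (hxy : x ≠ y)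
    (k : Fin 4) : Commute (uFactor a 3 x) (uFactor a k y) := by
  have hodd : ∀ k : Fin 4, (k = 1 ∨ k = 2) → Commute (uFactor a 3 x) (uFactor a k y) :=
    fun k hk => uFactor_three_eq_mul hCAR x ▸ commute_mul_of_anticomm
      (uFactor_odd_anticomm hCAR hxy (Or.inl rfl) hk)
      (uFactor_odd_anticomm hCAR hxy (Or.inr rfl) hk)
  match k with
  | 0 => exact Commute.one_right _
  | 1 => exact hodd 1 (Or.inl rfl)
  | 2 => exact hodd 2 (Or.inr rfl)
  | 3 =>
    rw [uFactor_three_eq_mul hCAR y]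
    exact (hodd 1 (Or.inl rfl)).mul_right (hodd 2 (Or.inr rfl))

lemma uFactor_mul_uFactor_eq_or_eq_neg [Algebra ℂ A] (hCAR : IsCAR a) {x y : Γ} (hxy : x ≠ y)
    (j k : Fin 4) :
    uFactor a j x * uFactor a k y = uFactor a k y * uFactor a j x ∨
      uFactor a j x * uFactor a k y = -(uFactor a k y * uFactor a j x) := by
  fin_cases j <;> fin_cases k
  all_goals first
    | exact .inr (uFactor_odd_anticomm hCAR hxy (by decide) (by decide))
    | exact .inl (uFactor_three_commute hCAR hxy _).eq
    | exact .inl (uFactor_three_commute hCAR hxy.symm _).symm.eq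
    | exact .inl (Commute.one_left _).eq
    | exact .inl (Commute.one_right _).eq

lemma uProd_cons (x : Γ) (l : List Γ) (k : Fin 4) (β : Fin l.length → Fin 4) :
    uProd a (x :: l) (Fin.cons k β) = uFactor a k x * uProd a l β := by
  simp [uProd, List.ofFn_succ]

lemma sum_conj_uProd_cons (x : Γ) (l : List Γ) (B : A) :
    ∑ α, star (uProd a (x :: l) α) * B * uProd a (x :: l) α =
      ∑ k, ∑ β, star (uProd a l β) * (star (uFactor a k x) * B * uFactor a k x) * uProd a l β := by
  refine ((Fin.consEquiv fun _ => Fin 4).sum_comp _).symm.trans ?_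
  rw [Fintype.sum_prod_type]
  refine Finset.sum_congr rfl fun k _ => Finset.sum_congr rfl fun β _ => ?_
  change star (uProd a (x :: l) (Fin.cons k β)) * B * uProd a (x :: l) (Fin.cons k β) = _
  rw [uProd_cons, star_mul]
  noncomm_ring

variable [Algebra ℂ A]

lemma condExp_singleton (x : Γ) (B : A) :
    condExp a [x] B = (4 : ℂ)⁻¹ • ∑ k, star (uFactor a k x) * B * uFactor a k x := by
  rw [condExp, sum_conj_uProd_cons]
  simp [uProd]

lemma condExp_cons (x : Γ) (l : List Γ) (B : A) :
    condExp a (x :: l) B = condExp a l (condExp a [x] B) := by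
  rw [condExp_singleton]
  unfold condExp
  rw [sum_conj_uProd_cons, Finset.sum_comm, List.length_cons, pow_succ, mul_inv, mul_smul]
  simp only [mul_smul_comm, smul_mul_assoc, Finset.mul_sum, Finset.sum_mul, Finset.smul_sum]

lemma condExp_append (l₁ l₂ : List Γ) (B : A) :
    condExp a (l₁ ++ l₂) B = condExp a l₂ (condExp a l₁ B) := by
  induction l₁ generalizing B with
  | nil => simp [condExp, uProd]
  | cons x l ih => rw [List.cons_append, condExp_cons x, ih, condExp_cons x l]

lemma condExp_singleton_comm (hCAR : IsCAR a) {x y : Γ} (hxy : x ≠ y) (B : A) :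
    condExp a [x] (condExp a [y] B) = condExp a [y] (condExp a [x] B) := by
  simp only [condExp_singleton, Finset.mul_sum, Finset.sum_mul, mul_smul_comm, smul_mul_assoc,
    Finset.smul_sum]
  rw [Finset.sum_comm]
  refine Finset.sum_congr rfl fun k _ => Finset.sum_congr rfl fun j _ => ?_
  rw [conj_conj_comm_of_eq_or_eq_neg (uFactor_mul_uFactor_eq_or_eq_neg hCAR hxy j k)]

lemma condExp_perm (hCAR : IsCAR a) {l l' : List Γ} (h : l.Perm l') (hl : l.Nodup) (B : A) :
    condExp a l B = condExp a l' B := by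
  induction h generalizing B with
  | nil => rfl
  | @cons x l₁ l₂ _ ih => rw [condExp_cons x l₁, condExp_cons x l₂, ih hl.of_cons]
  | swap x y l =>
    have hyx : y ≠ x := fun e => (List.nodup_cons.mp hl).1 (e ▸ List.mem_cons_self)
    rw [condExp_cons y (x :: l), condExp_cons x l, condExp_cons x (y :: l), condExp_cons y l,
      condExp_singleton_comm hCAR hyx.symm]
  | trans h₁ _ ih₁ ih₂ => rw [ih₁ hl, ih₂ (h₁.nodup_iff.mp hl)]

lemma condExp_eq_condExp_condExp [DecidableEq Γ] (hCAR : IsCAR a) {l l₁ l₂ : List Γ}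
    (hl : l.Nodup) (hl₁ : l₁.Nodup) (hl₂ : l₂.Nodup) (hdisj : Disjoint l₁.toFinset l₂.toFinset)
    (hunion : l₁.toFinset ∪ l₂.toFinset = l.toFinset) (B : A) :
    condExp a l B = condExp a l₂ (condExp a l₁ B) := by
  have hperm : l.Perm (l₁ ++ l₂) :=
    List.perm_of_nodup_nodup_toFinset_eq hl
      (hl₁.append hl₂ (List.disjoint_toFinset_iff_disjoint.mp hdisj))
      (by rw [List.toFinset_append, hunion])
  rw [condExp_perm hCAR hperm hl, condExp_append]

end CAR

theorem condExp_disjoint_decomposition_general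
    {Γ A : Type*} [DecidableEq Γ]
    [NormedRing A] [StarRing A] [NormedAlgebra ℂ A]
    (a : Γ → A) (hCAR : IsCAR a)
    (X Y Z Λ : Finset Γ)
    (hdisj : Disjoint (Λ \ Y) (Λ \ Z)) (hunion : (Λ \ Y) ∪ (Λ \ Z) = Λ \ X)
    (lX : List Γ) (hlX : lX.Nodup) (hlXset : lX.toFinset = Λ \ X)
    (lY : List Γ) (hlY : lY.Nodup) (hlYset : lY.toFinset = Λ \ Y)
    (lZ : List Γ) (hlZ : lZ.Nodup) (hlZset : lZ.toFinset = Λ \ Z) :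
    ∀ B ∈ carSpan a Λ,
      condExp a lX B = condExp a lY (condExp a lZ B) ∧
      condExp a lX B = condExp a lZ (condExp a lY B) := by
  intro B _
  rw [← hlXset, ← hlYset, ← hlZset] at hunion
  rw [← hlYset, ← hlZset] at hdisj
  exact ⟨condExp_eq_condExp_condExp hCAR hlX hlZ hlY hdisj.symm (by rwa [Finset.union_comm]) B,
    condExp_eq_condExp_condExp hCAR hlX hlY hlZ hdisj hunion B⟩

/-- disjoint decomposition of `𝔼_X^Λ`: if `Λ∖X` is the disjoint union of
`Λ∖Y` and `Λ∖Z`, then `𝔼_X^Λ = 𝔼_Y^Λ ∘ 𝔼_Z^Λ = 𝔼_Z^Λ ∘ 𝔼_Y^Λ` on `𝔄_Λ`. -/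
theorem condExp_disjoint_decomposition
    {Γ A : Type*} [DecidableEq Γ]
    [NormedRing A] [StarRing A] [CStarRing A] [NormedAlgebra ℂ A]
    (a : Γ → A) (hCAR : IsCAR a)
    (X Y Z Λ : Finset Γ) (hX : X ⊆ Λ) (hY : Y ⊆ Λ) (hZ : Z ⊆ Λ)
    (hdisj : Disjoint (Λ \ Y) (Λ \ Z)) (hunion : (Λ \ Y) ∪ (Λ \ Z) = Λ \ X)
    (lX : List Γ) (hlX : lX.Nodup) (hlXset : lX.toFinset = Λ \ X)
    (lY : List Γ) (hlY : lY.Nodup) (hlYset : lY.toFinset = Λ \ Y)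
    (lZ : List Γ) (hlZ : lZ.Nodup) (hlZset : lZ.toFinset = Λ \ Z) :
    ∀ B ∈ carSpan a Λ,
      condExp a lX B = condExp a lY (condExp a lZ B) ∧
      condExp a lX B = condExp a lZ (condExp a lY B) :=
  condExp_disjoint_decomposition_general a hCAR X Y Z Λ hdisj hunion lX hlX hlXset lY hlY hlYset lZ
    hlZ hlZset
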